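/- Forward stepping is strictly monotone within a symbol class: if PBWT_j[i'] = PBWT_j[i''] and i' < i'', then fore[i'][j] < fore[i''][j]. -/
import Mathlib


namespace PBWT

/-- The reversed prefix of length `j` (truncated at `w`) of haplotype `i`:
used to express the co-lexicographic order of prefixes. -/
def revPrefix {h w : ℕ} (S : Fin h → Fin w → ℕ) (j : ℕ) (i : Fin h) : List ℕ :=
  ((List.range j).filterMap (fun t => if ht : t < w then some (S i ⟨t, ht⟩) else none)).reverse

/-- `PA` is the stable sort of the haplotype indices by the co-lexicographic
order of their prefixes of length `j` (ties broken by original index). -/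
def IsStableSort {h w : ℕ} (S : Fin h → Fin w → ℕ) (j : ℕ) (PA : Fin h ≃ Fin h) : Prop :=
  ∀ a b : Fin h, a < b →
    List.Lex (· < ·) (revPrefix S j (PA a)) (revPrefix S j (PA b)) ∨
      (revPrefix S j (PA a) = revPrefix S j (PA b) ∧ (PA a).val < (PA b).val)

/-- Number of maximal runs of equal adjacent values in the sequence `f`. -/
def runCount {α : Type*} [DecidableEq α] {n : ℕ} (f : Fin n → α) : ℕ :=
  ((List.ofFn f).destutter (· ≠ ·)).length

/-- `h''`: the number of indices `i` with `S i ≠ S (i+1)`. -/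
noncomputable def adjDiff {h w : ℕ} (S : Fin h → Fin w → ℕ) : ℕ :=
  Nat.card {i : Fin h // ∃ h1 : (i : ℕ) + 1 < h, S i ≠ S ⟨(i : ℕ) + 1, h1⟩}

lemma revPrefix_succ {h w : ℕ} (S : Fin h → Fin w → ℕ) {j : ℕ} (hj : j < w) (x : Fin h) :
    revPrefix S (j + 1) x = S x ⟨j, hj⟩ :: revPrefix S j x := by
  unfold revPrefix
  rw [List.range_succ, List.filterMap_append]
  simp [hj]

theorem stmt5 (h w : ℕ) (S : Fin h → Fin w → ℕ) (j : ℕ) (hj : j < w)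
    (PA1 PA2 : Fin h ≃ Fin h)
    (hPA1 : IsStableSort S j PA1) (hPA2 : IsStableSort S (j + 1) PA2)
    (i1 i2 : Fin h) (hlt : i1 < i2)
    (heq : S (PA1 i1) ⟨j, hj⟩ = S (PA1 i2) ⟨j, hj⟩) :
    PA2.symm (PA1 i1) < PA2.symm (PA1 i2) := by
  set a := PA1 i1 with ha
  set b := PA1 i2 with hb
  have hab : a ≠ b := fun hab => absurd (PA1.injective hab) (Fin.ne_of_lt hlt)
  -- strict stable-order relation at j+1 between a and b
  have hR : List.Lex (· < ·) (revPrefix S (j+1) a) (revPrefix S (j+1) b) ∨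
      (revPrefix S (j+1) a = revPrefix S (j+1) b ∧ (a : ℕ) < (b : ℕ)) := by
    rw [revPrefix_succ S hj a, revPrefix_succ S hj b]
    rcases hPA1 i1 i2 hlt with hL | ⟨hE, hI⟩
    · exact Or.inl (heq ▸ List.Lex.cons hL)
    · exact Or.inr ⟨by rw [heq, hE], hI⟩
  rcases lt_trichotomy (PA2.symm a) (PA2.symm b) with hg | hg | hg
  · exact hg
  · exact absurd (PA2.symm.injective hg) hab
  · exfalso
    have hR' := hPA2 _ _ hg
    rw [Equiv.apply_symm_apply, Equiv.apply_symm_apply] at hR'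
    rcases hR with hL | ⟨hE, hI⟩ <;> rcases hR' with hL' | ⟨hE', hI'⟩
    · exact asymm hL hL'
    · exact absurd (hE' ▸ hL) (irrefl_of (List.Lex (· < ·)) _)
    · exact absurd (hE ▸ hL') (irrefl_of (List.Lex (· < ·)) _)
    · exact absurd hI' (not_lt.mpr (le_of_lt hI))


end PBWT
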